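/- Let G be a graph, H a subgraph with e(H) ≥ α·e(G) for some 0 < α ≤ 1, and let 𝒜 be any vertex partition of G inducing partition ℬ on V(H). Writing ĥ = ĥ_H and x_B = vol_H(B)/vol(H) for B ∈ ℬ, we have q_𝒜(G) ≤ 1 − α·ĥ + α·(ĥ − α)·∑_{B∈ℬ} x_B². -/

import Mathlib

open Finset
open scoped Classical

noncomputable section

variable {V : Type*} [Fintype V]

/-- Number of edges between `A` and `B` (each cross edge counted once when `A`,`B` disjoint). -/
def ecut (G : SimpleGraph V) (A B : Finset V) : ℝ :=
  ((A ×ˢ B).filter fun p => G.Adj p.1 p.2).card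

/-- Number of edges inside `A`. -/
def ein (G : SimpleGraph V) (A : Finset V) : ℝ := ecut G A A / 2

/-- Volume of a vertex set: sum of degrees. -/
def gvol (G : SimpleGraph V) (A : Finset V) : ℝ := ∑ v ∈ A, (G.degree v : ℝ)

/-- Number of edges of `G`. -/
def edgecount (G : SimpleGraph V) : ℝ := (G.edgeFinset.card : ℝ)

/-- Conductance (Cheeger constant) `h_G`. -/
def conduct (G : SimpleGraph V) : ℝ :=
  sInf { x | ∃ A : Finset V, A.Nonempty ∧ A ≠ univ ∧
    x = ecut G A Aᶜ / min (gvol G A) (gvol G Aᶜ) }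

/-- Expansion-by-products `ĥ_G`. -/
def hhat (G : SimpleGraph V) : ℝ :=
  sInf { x | ∃ A : Finset V, A.Nonempty ∧ A ≠ univ ∧
    x = ecut G A Aᶜ * gvol G univ / (gvol G A * gvol G Aᶜ) }

/-- Modularity score of a vertex partition. -/
def modScore (G : SimpleGraph V) (P : Finpartition (univ : Finset V)) : ℝ :=
  (∑ A ∈ P.parts, ein G A) / edgecount G
    - (∑ A ∈ P.parts, (gvol G A) ^ 2) / (4 * (edgecount G) ^ 2)

/-- Modularity `q*(G)`: maximum modularity score over vertex partitions. -/
def modularity (G : SimpleGraph V) : ℝ :=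
  sSup { x | ∃ P : Finpartition (univ : Finset V), x = modScore G P }

/- ### Auxiliary lemmas -/

lemma ecut_eq_sum (G : SimpleGraph V) (A B : Finset V) :
    ecut G A B = ∑ a ∈ A, ∑ b ∈ B, (if G.Adj a b then (1:ℝ) else 0) := by
  rw [ecut, Finset.card_filter]
  push_cast
  rw [Finset.sum_product]

lemma ecut_nonneg (G : SimpleGraph V) (A B : Finset V) : 0 ≤ ecut G A B :=
  Nat.cast_nonneg _

lemma gvol_nonneg (G : SimpleGraph V) (A : Finset V) : 0 ≤ gvol G A :=
  Finset.sum_nonneg fun _ _ => Nat.cast_nonneg _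

lemma ecut_mono {G H : SimpleGraph V} (hle : H ≤ G) (A B : Finset V) :
    ecut H A B ≤ ecut G A B := by
  rw [ecut_eq_sum, ecut_eq_sum]
  refine Finset.sum_le_sum fun a _ => Finset.sum_le_sum fun b _ => ?_
  by_cases h : H.Adj a b
  · simp [h, hle h]
  · simp only [h, if_false]
    split <;> norm_num

lemma gvol_mono {G H : SimpleGraph V} (hle : H ≤ G) (A : Finset V) :
    gvol H A ≤ gvol G A := by
  refine Finset.sum_le_sum fun v _ => ?_
  have hsub : H.neighborFinset v ⊆ G.neighborFinset v := by
    intro w hw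
    rw [SimpleGraph.mem_neighborFinset] at hw ⊢
    exact hle hw
  exact_mod_cast Finset.card_le_card hsub

lemma ecut_union_right (G : SimpleGraph V) (A : Finset V) {B C : Finset V}
    (h : Disjoint B C) : ecut G A (B ∪ C) = ecut G A B + ecut G A C := by
  simp only [ecut_eq_sum, Finset.sum_union h, Finset.sum_add_distrib]

lemma ecut_univ_right (G : SimpleGraph V) (A : Finset V) :
    ecut G A univ = gvol G A := by
  rw [ecut_eq_sum, gvol]
  refine Finset.sum_congr rfl fun a _ => ?_
  rw [Finset.sum_boole, SimpleGraph.degree, SimpleGraph.neighborFinset_eq_filter]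

lemma ecut_self_add_compl (G : SimpleGraph V) (A : Finset V) :
    ecut G A A + ecut G A Aᶜ = gvol G A := by
  rw [← ecut_univ_right G A, ← Finset.union_compl A, ecut_union_right G A disjoint_compl_right]

lemma gvol_add_compl (G : SimpleGraph V) (A : Finset V) :
    gvol G A + gvol G Aᶜ = gvol G univ := by
  rw [gvol, gvol, gvol, ← Finset.sum_union disjoint_compl_right, Finset.union_compl]

lemma gvol_univ (G : SimpleGraph V) : gvol G univ = 2 * edgecount G := by
  rw [gvol, edgecount]
  exact_mod_cast congrArg (Nat.cast : ℕ → ℝ) G.sum_degrees_eq_twice_card_edges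

lemma sum_parts (P : Finpartition (univ : Finset V)) (f : V → ℝ) :
    ∑ A ∈ P.parts, ∑ v ∈ A, f v = ∑ v ∈ univ, f v := by
  have h := Finset.sum_biUnion (s := P.parts) (t := id) (f := f)
    (fun a ha b hb hab => P.disjoint ha hb hab)
  rw [P.biUnion_parts] at h
  exact h.symm

lemma hhat_nonneg (H : SimpleGraph V) : 0 ≤ hhat H := by
  refine Real.sInf_nonneg fun x hx => ?_
  obtain ⟨A, -, -, rfl⟩ := hx
  exact div_nonneg (mul_nonneg (ecut_nonneg _ _ _) (gvol_nonneg _ _))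
    (mul_nonneg (gvol_nonneg _ _) (gvol_nonneg _ _))

lemma hhat_le (H : SimpleGraph V) {A : Finset V} (h1 : A.Nonempty) (h2 : A ≠ univ) :
    hhat H ≤ ecut H A Aᶜ * gvol H univ / (gvol H A * gvol H Aᶜ) := by
  refine csInf_le ⟨0, fun x hx => ?_⟩ ⟨A, h1, h2, rfl⟩
  obtain ⟨B, -, -, rfl⟩ := hx
  exact div_nonneg (mul_nonneg (ecut_nonneg _ _ _) (gvol_nonneg _ _))
    (mul_nonneg (gvol_nonneg _ _) (gvol_nonneg _ _))

lemma hhat_key (H : SimpleGraph V) (hv : 0 < gvol H univ) {A : Finset V} (h1 : A.Nonempty) :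
    hhat H * (gvol H A * gvol H Aᶜ) / gvol H univ ≤ ecut H A Aᶜ := by
  by_cases h2 : A = univ
  · subst h2
    have : gvol H (univ : Finset V)ᶜ = 0 := by simp [gvol]
    rw [this]
    simpa using ecut_nonneg H univ (univ : Finset V)ᶜ
  by_cases hz : gvol H A * gvol H Aᶜ = 0
  · rw [hz]
    simpa using ecut_nonneg H A Aᶜ
  have hpos : 0 < gvol H A * gvol H Aᶜ :=
    lt_of_le_of_ne (mul_nonneg (gvol_nonneg _ _) (gvol_nonneg _ _)) (Ne.symm hz)
  have h := hhat_le H h1 h2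
  calc hhat H * (gvol H A * gvol H Aᶜ) / gvol H univ
      ≤ (ecut H A Aᶜ * gvol H univ / (gvol H A * gvol H Aᶜ)) * (gvol H A * gvol H Aᶜ)
          / gvol H univ := by gcongr
    _ = ecut H A Aᶜ := by field_simp; rw [mul_assoc, mul_div_assoc, div_self hpos.ne', mul_one]

/-- Detailed upper bound on the modularity score of any partition in terms of
the expansion-by-products `ĥ = ĥ_H` of a subgraph `H` with `e(H) ≥ α e(G)`:
`q_𝒜(G) ≤ 1 - α ĥ + α (ĥ - α) ∑_B x_B²` where `x_B = vol_H(B)/vol(H)`. -/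
theorem stmt5 {V : Type*} [Fintype V] (G H : SimpleGraph V) (hle : H ≤ G)
    (hG : G.edgeFinset.Nonempty) (α : ℝ) (hα0 : 0 < α) (hα1 : α ≤ 1)
    (hsize : α * edgecount G ≤ edgecount H)
    (P : Finpartition (univ : Finset V)) :
    modScore G P ≤ 1 - α * hhat H
      + α * (hhat H - α) * ∑ B ∈ P.parts, (gvol H B / gvol H univ) ^ 2 := by
  have hm : (0:ℝ) < edgecount G := by
    unfold edgecount
    exact_mod_cast Finset.card_pos.mpr hG
  set m := edgecount G with hm'
  have heH : 0 < edgecount H := lt_of_lt_of_le (mul_pos hα0 hm) hsize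
  have hv : 0 < gvol H univ := by rw [gvol_univ]; linarith
  set v := gvol H univ with hv'
  have hvα : 2 * (α * m) ≤ v := by rw [hv', gvol_univ]; linarith
  set S := ∑ B ∈ P.parts, (gvol H B / v) ^ 2 with hS'
  have hS0 : 0 ≤ S := Finset.sum_nonneg fun B _ => sq_nonneg _
  have hgsum : ∑ A ∈ P.parts, gvol H A = v := by
    rw [hv']; exact sum_parts P fun w => (H.degree w : ℝ)
  have hxle : ∀ B ∈ P.parts, gvol H B / v ≤ 1 := by
    intro B hB
    rw [div_le_one hv]
    calc gvol H B ≤ ∑ A ∈ P.parts, gvol H A :=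
          Finset.single_le_sum (fun A _ => gvol_nonneg H A) hB
      _ = v := hgsum
  have hS1 : S ≤ 1 := by
    calc S ≤ ∑ B ∈ P.parts, gvol H B / v := by
          refine Finset.sum_le_sum fun B hB => ?_
          have h0 : 0 ≤ gvol H B / v := div_nonneg (gvol_nonneg _ _) hv.le
          nlinarith [hxle B hB]
      _ = 1 := by rw [← Finset.sum_div, hgsum, div_self hv.ne']
  have hGsum : ∑ A ∈ P.parts, gvol G A = 2 * m := by
    rw [hm', ← gvol_univ]; exact sum_parts P fun w => (G.degree w : ℝ)
  set C := ∑ A ∈ P.parts, ecut G A Aᶜ with hC'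
  set D := ∑ A ∈ P.parts, gvol G A ^ 2 with hD'
  have hs2 : ∑ A ∈ P.parts, gvol H A ^ 2 = S * v ^ 2 := by
    rw [hS', Finset.sum_mul]
    refine Finset.sum_congr rfl fun A _ => ?_
    field_simp
  have hE : ∑ A ∈ P.parts, ein G A = m - C / 2 := by
    calc ∑ A ∈ P.parts, ein G A
        = ∑ A ∈ P.parts, (gvol G A - ecut G A Aᶜ) / 2 := by
          refine Finset.sum_congr rfl fun A _ => ?_
          rw [ein, ← ecut_self_add_compl G A]; ring
      _ = ((∑ A ∈ P.parts, gvol G A) - C) / 2 := by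
          rw [hC', ← Finset.sum_sub_distrib, Finset.sum_div]
      _ = m - C / 2 := by rw [hGsum]; ring
  have hh1S : 0 ≤ hhat H * (1 - S) :=
    mul_nonneg (hhat_nonneg H) (by linarith)
  have hC : hhat H * v * (1 - S) ≤ C := by
    have step : ∀ A ∈ P.parts,
        hhat H * (gvol H A * (v - gvol H A)) / v ≤ ecut G A Aᶜ := by
      intro A hA
      have hAc : gvol H Aᶜ = v - gvol H A := by
        have := gvol_add_compl H A
        rw [← hv'] at this
        linarith
      calc hhat H * (gvol H A * (v - gvol H A)) / v
          = hhat H * (gvol H A * gvol H Aᶜ) / v := by rw [hAc]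
        _ ≤ ecut H A Aᶜ := hhat_key H hv (P.nonempty_of_mem_parts hA)
        _ ≤ ecut G A Aᶜ := ecut_mono hle A Aᶜ
    have expand : (∑ A ∈ P.parts, hhat H * (gvol H A * (v - gvol H A)) / v)
        = hhat H / v * ((∑ A ∈ P.parts, gvol H A) * v
            - ∑ A ∈ P.parts, gvol H A ^ 2) := by
      rw [mul_sub, Finset.sum_mul, Finset.mul_sum, Finset.mul_sum,
        ← Finset.sum_sub_distrib]
      exact Finset.sum_congr rfl fun A _ => by ring
    calc hhat H * v * (1 - S)
        = hhat H / v * ((∑ A ∈ P.parts, gvol H A) * v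
            - ∑ A ∈ P.parts, gvol H A ^ 2) := by
          rw [hgsum, hs2]; field_simp
      _ = ∑ A ∈ P.parts, hhat H * (gvol H A * (v - gvol H A)) / v := expand.symm
      _ ≤ C := Finset.sum_le_sum step
  have hD : S * (4 * α ^ 2 * m ^ 2) ≤ D := by
    have h2 : (0:ℝ) ≤ 2 * (α * m) := by positivity
    have h1 : (2 * (α * m)) ^ 2 ≤ v ^ 2 := by nlinarith
    calc S * (4 * α ^ 2 * m ^ 2) = S * (2 * (α * m)) ^ 2 := by ring
      _ ≤ S * v ^ 2 := mul_le_mul_of_nonneg_left h1 hS0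
      _ = ∑ A ∈ P.parts, gvol H A ^ 2 := hs2.symm
      _ ≤ D := Finset.sum_le_sum fun A _ =>
          pow_le_pow_left₀ (gvol_nonneg H A) (gvol_mono hle A) 2
  rw [modScore, hE]
  have e2 : α ^ 2 * S ≤ D / (4 * m ^ 2) := by
    rw [le_div_iff₀ (by positivity)]
    nlinarith [hD]
  have e3 : α * (hhat H * (1 - S)) ≤ C / (2 * m) := by
    rw [le_div_iff₀ (by positivity)]
    calc α * (hhat H * (1 - S)) * (2 * m)
        = hhat H * (1 - S) * (2 * (α * m)) := by ring
      _ ≤ hhat H * (1 - S) * v := mul_le_mul_of_nonneg_left hvα hh1S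
      _ = hhat H * v * (1 - S) := by ring
      _ ≤ C := hC
  have e1 : (m - C / 2) / m = 1 - C / (2 * m) := by
    field_simp
  have e4 : 1 - α * (hhat H * (1 - S)) - α ^ 2 * S
      = 1 - α * hhat H + α * (hhat H - α) * S := by ring
  rw [e1]
  linarith
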